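/- Let N > 2 be an integer, let μ be a measure on a measurable space X, let u, g : X → ℝ be measurable and nonnegative, and let C > 0. Assume that (i) μ({x : u(x) ≥ l}) ≤ C · l^{−N/(N−2)} for every real l ≥ 1, and (ii) μ({x : g(x) ≥ t and u(x) ≤ l}) ≤ C · l / t² for all reals t ≥ 1 and l ≥ 1. Then μ({x : g(x) ≥ t}) ≤ 2C · t^{−N/(N−1)} for every t ≥ 1. -/

import Mathlib

open MeasureTheory

section Interpolation

variable {X : Type*} [MeasurableSpace X] (μ : Measure X) (u g : X → ℝ)

theorem measure_setOf_le_le_add (t l : ℝ) :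
    μ {x | t ≤ g x} ≤ μ {x | t ≤ g x ∧ u x ≤ l} + μ {x | l ≤ u x} := by
  refine (measure_mono fun x hx => ?_).trans (measure_union_le _ _)
  rcases le_total (u x) l with h | h
  exacts [Or.inl ⟨hx, h⟩, Or.inr h]

/-- Splitting at the level `l = t ^ (p / (1 + q))` balances the two bounds: both become
`C * t ^ (-(p * q / (1 + q)))`. -/
theorem measure_setOf_le_le_rpow_of_interpolation {p q C : ℝ} (hp : 0 ≤ p) (hq : 0 ≤ q)
    (h1 : ∀ l : ℝ, 1 ≤ l → μ {x | l ≤ u x} ≤ ENNReal.ofReal (C * l ^ (-q)))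
    (h2 : ∀ t l : ℝ, 1 ≤ t → 1 ≤ l →
      μ {x | t ≤ g x ∧ u x ≤ l} ≤ ENNReal.ofReal (C * l / t ^ p))
    {t : ℝ} (ht : 1 ≤ t) :
    μ {x | t ≤ g x} ≤ 2 * ENNReal.ofReal (C * t ^ (-(p * q / (1 + q)))) := by
  have ht0 : 0 < t := by linarith
  set l := t ^ (p / (1 + q))
  have hl : 1 ≤ l := Real.one_le_rpow ht (by positivity)
  have h_tail : C * l ^ (-q) = C * t ^ (-(p * q / (1 + q))) := by
    rw [← Real.rpow_mul ht0.le]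
    ring_nf
  have h_trunc : C * l / t ^ p = C * t ^ (-(p * q / (1 + q))) := by
    rw [mul_div_assoc, ← Real.rpow_sub ht0]
    congr 2
    field_simp
    ring
  calc μ {x | t ≤ g x} ≤ μ {x | t ≤ g x ∧ u x ≤ l} + μ {x | l ≤ u x} :=
        measure_setOf_le_le_add μ u g t l
    _ ≤ ENNReal.ofReal (C * l / t ^ p) + ENNReal.ofReal (C * l ^ (-q)) :=
        add_le_add (h2 t l ht hl) (h1 l hl)
    _ = 2 * ENNReal.ofReal (C * t ^ (-(p * q / (1 + q)))) := by
        rw [h_tail, h_trunc, two_mul]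

end Interpolation

theorem levelset_interpolation_general
    {X : Type*} [MeasurableSpace X] (N : ℕ) (hN : 2 < N) (μ : Measure X)
    (u g : X → ℝ) (C : ℝ)
    (h1 : ∀ l : ℝ, 1 ≤ l →
      μ {x | l ≤ u x} ≤ ENNReal.ofReal (C * l ^ (-(N : ℝ) / ((N : ℝ) - 2))))
    (h2 : ∀ t l : ℝ, 1 ≤ t → 1 ≤ l →
      μ {x | t ≤ g x ∧ u x ≤ l} ≤ ENNReal.ofReal (C * l / t ^ 2)) :
    ∀ t : ℝ, 1 ≤ t →
      μ {x | t ≤ g x} ≤ ENNReal.ofReal (2 * C * t ^ (-(N : ℝ) / ((N : ℝ) - 1))) := by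
  intro t ht
  have hN2 : (0 : ℝ) < N - 2 := by
    have : (2 : ℝ) < N := by exact_mod_cast hN
    linarith
  have h_exp : 2 * (N / (N - 2)) / (1 + N / (N - 2)) = (N : ℝ) / (N - 1) := by
    have : (N : ℝ) - 1 ≠ 0 := by linarith
    field_simp
    ring
  have h := measure_setOf_le_le_rpow_of_interpolation μ u g (p := 2) (q := N / (N - 2))
    zero_le_two (by positivity) (by simpa only [neg_div] using h1)
    (by simpa only [Real.rpow_two] using h2) ht
  rw [h_exp] at h
  rwa [neg_div, mul_assoc, ENNReal.ofReal_mul zero_le_two, ENNReal.ofReal_ofNat]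

/-- Level-set interpolation: from decay of order `N/(N-2)` for `u` and the truncated
energy bound for `g`, one deduces decay of order `N/(N-1)` for `g`. -/
theorem levelset_interpolation
    {X : Type*} [MeasurableSpace X] (N : ℕ) (hN : 2 < N) (μ : Measure X)
    (u g : X → ℝ) (hu : Measurable u) (hg : Measurable g)
    (hu0 : ∀ x, 0 ≤ u x) (hg0 : ∀ x, 0 ≤ g x) (C : ℝ) (hC : 0 < C)
    (h1 : ∀ l : ℝ, 1 ≤ l →
      μ {x | l ≤ u x} ≤ ENNReal.ofReal (C * l ^ (-(N : ℝ) / ((N : ℝ) - 2))))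
    (h2 : ∀ t l : ℝ, 1 ≤ t → 1 ≤ l →
      μ {x | t ≤ g x ∧ u x ≤ l} ≤ ENNReal.ofReal (C * l / t ^ 2)) :
    ∀ t : ℝ, 1 ≤ t →
      μ {x | t ≤ g x} ≤ ENNReal.ofReal (2 * C * t ^ (-(N : ℝ) / ((N : ℝ) - 1))) :=
  levelset_interpolation_general N hN μ u g C h1 h2
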